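/- arXiv:2112.07705 — 2 statements merged into one kernel-verified Lean document; each statement's English description precedes it below -/
import Mathlib

section
/- Along integral curves of the Hamilton vector field H_p of p(t, r, λ, ξ) = (α²/r² − 1)λ² + ξ² lying in the zero set of p with λ ≠ 0 and r > 0, one has r(s)² = α² + (2λ s + c)² for some constant c; in particular r(s) → ∞ monotonically (after the minimum) as s → ±∞, and r(s) ≥ α for all s. -/
/-!
The quantity `r ξ` generates dilations, and on `{p = 0}` its `H_p`-derivative is
`2ξ² + 2α²λ²/r² = 2λ²`, a constant. Hence `r ξ = λ (2λs + c)` is affine in `s`. Multiplying the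
null condition by `r²` gives `r² = α² + (r ξ / λ)²`, which is the claimed identity; the lower
bound and the growth of `r` are read off from it.
-/

open Filter

theorem eq_add_smul_of_hasDerivAt_const {𝕜 E : Type*} [RCLike 𝕜] [NormedAddCommGroup E]
    [NormedSpace 𝕜 E] {f : 𝕜 → E} {a : E} (hf : ∀ x, HasDerivAt f a x) (x : 𝕜) :
    f x = f 0 + x • a := by
  have hg : ∀ x, HasDerivAt (fun x => f x - x • a) 0 x := fun x => by
    simpa using (hf x).fun_sub ((hasDerivAt_id x).smul_const a)
  have := is_const_of_deriv_eq_zero (fun x => (hg x).differentiableAt) (fun x => (hg x).deriv) x 0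
  rwa [zero_smul, sub_zero, sub_eq_iff_eq_add] at this

theorem tendsto_abs_mul_add_atBot_sup_atTop {a : ℝ} (ha : a ≠ 0) (b : ℝ) :
    Tendsto (fun x => |a * x + b|) (atBot ⊔ atTop) atTop := by
  have hlow : ∀ x, |a| * |x| + -|b| ≤ |a * x + b| := fun x => by
    have := abs_sub_abs_le_abs_sub (a * x) (-b)
    rw [abs_mul, abs_neg, sub_neg_eq_add] at this
    linarith
  refine tendsto_atTop_mono hlow (tendsto_atTop_add_const_right _ _ ?_)
  exact (tendsto_abs_atBot_atTop.sup tendsto_abs_atTop_atTop).const_mul_atTop (abs_pos.2 ha)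

theorem sq_eq_sq_add_sq_of_null {α lam x y : ℝ} (hlam : lam ≠ 0) (hx : x ≠ 0)
    (hnull : (α ^ 2 / x ^ 2 - 1) * lam ^ 2 + y ^ 2 = 0) :
    x ^ 2 = α ^ 2 + (x * y / lam) ^ 2 := by
  field_simp at hnull ⊢
  linear_combination -hnull

theorem hasDerivAt_mul_of_null_bicharacteristic {α lam s : ℝ} {r ξ : ℝ → ℝ} (hrs : r s ≠ 0)
    (hr : HasDerivAt r (2 * ξ s) s) (hξ : HasDerivAt ξ (2 * α ^ 2 * lam ^ 2 / r s ^ 3) s)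
    (hnull : (α ^ 2 / r s ^ 2 - 1) * lam ^ 2 + ξ s ^ 2 = 0) :
    HasDerivAt (fun s => r s * ξ s) (2 * lam ^ 2) s := by
  refine (hr.mul hξ).congr_deriv ?_
  field_simp at hnull ⊢
  linear_combination hnull

theorem bicharacteristic_radius_general (α lam : ℝ) (hlam : lam ≠ 0)
    (r ξ : ℝ → ℝ) (hrpos : ∀ s, 0 < r s)
    (hr : ∀ s, HasDerivAt r (2 * ξ s) s)
    (hξ : ∀ s, HasDerivAt ξ (2 * α ^ 2 * lam ^ 2 / (r s) ^ 3) s)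
    (hchar : ∀ s, (α ^ 2 / (r s) ^ 2 - 1) * lam ^ 2 + (ξ s) ^ 2 = 0) :
    ∃ c : ℝ, (∀ s, (r s) ^ 2 = α ^ 2 + (2 * lam * s + c) ^ 2) ∧
      (∀ s, α ≤ r s) ∧
      Filter.Tendsto r Filter.atTop Filter.atTop ∧
      Filter.Tendsto r Filter.atBot Filter.atTop := by
  obtain ⟨c, hc⟩ : ∃ c, c = r 0 * ξ 0 / lam := ⟨_, rfl⟩
  have hrξ : ∀ s, HasDerivAt (fun s => r s * ξ s) (2 * lam ^ 2) s := fun s =>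
    hasDerivAt_mul_of_null_bicharacteristic (hrpos s).ne' (hr s) (hξ s) (hchar s)
  have hmul : ∀ s, r s * ξ s / lam = 2 * lam * s + c := fun s => by
    rw [hc, eq_add_smul_of_hasDerivAt_const hrξ s, smul_eq_mul]
    field_simp
    ring
  have hsq : ∀ s, r s ^ 2 = α ^ 2 + (2 * lam * s + c) ^ 2 := fun s => by
    rw [← hmul]
    exact sq_eq_sq_add_sq_of_null hlam (hrpos s).ne' (hchar s)
  have habs : ∀ s, |2 * lam * s + c| ≤ r s := fun s =>
    abs_le_of_sq_le_sq (hsq s ▸ le_add_of_nonneg_left (sq_nonneg α)) (hrpos s).le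
  have hα : ∀ s, α ≤ r s := fun s =>
    (le_abs_self α).trans (abs_le_of_sq_le_sq (hsq s ▸ le_add_of_nonneg_right (sq_nonneg _))
      (hrpos s).le)
  obtain ⟨hbot, htop⟩ := tendsto_sup.1 <| tendsto_atTop_mono habs <|
    tendsto_abs_mul_add_atBot_sup_atTop (mul_ne_zero two_ne_zero hlam) c
  exact ⟨c, hsq, hα, htop, hbot⟩

/-- Along null bicharacteristics of `p = (α²/r² − 1)λ² + ξ²` (integral curves of the
Hamilton vector field `H_p = −2λ(1−α²/r²)∂_t + 2ξ∂_r + (2α²λ²/r³)∂_ξ` lying in `{p = 0}`)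
with `λ ≠ 0` and `r > 0`, one has `r(s)² = α² + (2λs + c)²` for some constant `c`;
in particular `r ≥ α` everywhere and `r → ∞` in both directions. -/
theorem bicharacteristic_radius (α lam : ℝ) (hα : 0 < α) (hlam : lam ≠ 0)
    (t r ξ : ℝ → ℝ) (hrpos : ∀ s, 0 < r s)
    (ht : ∀ s, HasDerivAt t (-2 * lam * (1 - α ^ 2 / (r s) ^ 2)) s)
    (hr : ∀ s, HasDerivAt r (2 * ξ s) s)
    (hξ : ∀ s, HasDerivAt ξ (2 * α ^ 2 * lam ^ 2 / (r s) ^ 3) s)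
    (hchar : ∀ s, (α ^ 2 / (r s) ^ 2 - 1) * lam ^ 2 + (ξ s) ^ 2 = 0) :
    ∃ c : ℝ, (∀ s, (r s) ^ 2 = α ^ 2 + (2 * lam * s + c) ^ 2) ∧
      (∀ s, α ≤ r s) ∧
      Filter.Tendsto r Filter.atTop Filter.atTop ∧
      Filter.Tendsto r Filter.atBot Filter.atTop :=
  bicharacteristic_radius_general α lam hlam r ξ hrpos hr hξ hchar
end

section
/- Forward escape of bicharacteristics: let γ(s) = (t(s), r(s), λ, ξ(s)) be a maximal integral curve of H_p = −2λ(1 − α²/r²)∂_t + 2ξ∂_r + (2α²λ²/r³)∂_ξ in {r > 0} with p = 0 and λ ≠ 0. Then exactly one of the two time directions ±s has t(s) → −∞ and r(s) → +∞ as s → ±∞; that is, every null bicharacteristic escapes to arbitrarily large r in backward time t. -/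
/-!
Along a null bicharacteristic, `(r ξ)' = 2 ξ² + 2 α² λ² / r² = 2 λ²`, so `(r²)' = 4 r ξ` is affine
in `s` and `r² = α² + (2 λ s + c)²`; hence `r → ∞` at both ends. Consequently
`dt/ds = -2 λ (1 - α² / r²) → -2 λ ≠ 0` at both ends, so `t` escapes linearly, to `-∞` as
`s → sgn(λ) ∞` and to `+∞` as `s → -sgn(λ) ∞`, which rules out the other alternative.
-/

open Filter Set Topology

theorem tendsto_atTop_of_hasDerivAt_of_tendsto {f f' : ℝ → ℝ} {L : ℝ}
    (hf : ∀ x, HasDerivAt f (f' x) x) (hL : 0 < L) (hf' : Tendsto f' atTop (𝓝 L)) :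
    Tendsto f atTop atTop := by
  obtain ⟨S, hS⟩ := eventually_atTop.1 (hf'.eventually_const_le (half_lt_self hL))
  have hgrowth : ∀ x ∈ Ici S, L / 2 * (x - S) ≤ f x - f S := fun x hx =>
    (convex_Ici S).mul_sub_le_image_sub_of_le_deriv
      (fun y _ => (hf y).continuousAt.continuousWithinAt)
      (fun y _ => (hf y).differentiableAt.differentiableWithinAt)
      (fun y hy => (hf y).deriv ▸ hS y (interior_subset hy)) S self_mem_Ici x hx hx
  have hlin : Tendsto (fun x => f S + L / 2 * (x - S)) atTop atTop :=
    tendsto_atTop_add_const_left _ _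
      ((tendsto_atTop_add_const_right _ _ tendsto_id).const_mul_atTop (half_pos hL))
  refine tendsto_atTop_mono' _ ?_ hlin
  filter_upwards [eventually_ge_atTop S] with x hx
  linarith [hgrowth x hx]

theorem tendsto_atBot_of_hasDerivAt_of_tendsto {f f' : ℝ → ℝ} {L : ℝ}
    (hf : ∀ x, HasDerivAt f (f' x) x) (hL : 0 < L) (hf' : Tendsto f' atBot (𝓝 L)) :
    Tendsto f atBot atBot := by
  obtain ⟨S, hS⟩ := eventually_atBot.1 (hf'.eventually_const_le (half_lt_self hL))
  have hgrowth : ∀ x ∈ Iic S, L / 2 * (S - x) ≤ f S - f x := fun x hx =>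
    (convex_Iic S).mul_sub_le_image_sub_of_le_deriv
      (fun y _ => (hf y).continuousAt.continuousWithinAt)
      (fun y _ => (hf y).differentiableAt.differentiableWithinAt)
      (fun y hy => (hf y).deriv ▸ hS y (mem_Iic.1 (interior_subset hy))) x hx S self_mem_Iic hx
  have hlin : Tendsto (fun x => f S + L / 2 * (x - S)) atBot atBot :=
    tendsto_atBot_add_const_left _ _
      ((tendsto_atBot_add_const_right _ _ tendsto_id).const_mul_atBot (half_pos hL))
  refine tendsto_atBot_mono' _ ?_ hlin
  filter_upwards [eventually_le_atBot S] with x hx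
  linarith [hgrowth x hx]

theorem tendsto_cocompact_atTop_of_abs_affine_le {f : ℝ → ℝ} {k c : ℝ} (hk : k ≠ 0)
    (hf : ∀ s, |k * s + c| ≤ f s) : Tendsto f (cocompact ℝ) atTop := by
  have hlin : Tendsto (fun s : ℝ => |k| * ‖s‖ - |c|) (cocompact ℝ) atTop :=
    tendsto_atTop_add_const_right _ _
      (tendsto_norm_cocompact_atTop.const_mul_atTop (abs_pos.2 hk))
  refine tendsto_atTop_mono (fun s => ?_) hlin
  calc |k| * ‖s‖ - |c| = |k * s| - |-c| := by rw [abs_mul, abs_neg, Real.norm_eq_abs]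
    _ ≤ |k * s - -c| := abs_sub_abs_le_abs_sub _ _
    _ ≤ f s := by simpa using hf s

theorem radius_mul_momentum_eq {α lam : ℝ} {r ξ : ℝ → ℝ} (hrpos : ∀ s, 0 < r s)
    (hr : ∀ s, HasDerivAt r (2 * ξ s) s)
    (hξ : ∀ s, HasDerivAt ξ (2 * α ^ 2 * lam ^ 2 / (r s) ^ 3) s)
    (hchar : ∀ s, (α ^ 2 / (r s) ^ 2 - 1) * lam ^ 2 + (ξ s) ^ 2 = 0) (s : ℝ) :
    r s * ξ s = r 0 * ξ 0 + 2 * lam ^ 2 * s := by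
  have hderiv : ∀ s, HasDerivAt (fun s => r s * ξ s - 2 * lam ^ 2 * s) 0 s := by
    intro s
    refine (((hr s).fun_mul (hξ s)).fun_sub
      ((hasDerivAt_id' s).const_mul (2 * lam ^ 2))).congr_deriv ?_
    have hrs : r s * (2 * α ^ 2 * lam ^ 2 / r s ^ 3) = 2 * (α ^ 2 / r s ^ 2) * lam ^ 2 := by
      field_simp [(hrpos s).ne']
    rw [hrs]
    linear_combination 2 * hchar s
  have hconst := is_const_of_deriv_eq_zero (fun s => (hderiv s).differentiableAt)
    (fun s => (hderiv s).deriv) s 0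
  simp only [mul_zero, sub_zero] at hconst
  linarith

theorem exists_radius_sq_eq {α lam : ℝ} {r ξ : ℝ → ℝ} (hlam : lam ≠ 0)
    (hrpos : ∀ s, 0 < r s)
    (hr : ∀ s, HasDerivAt r (2 * ξ s) s)
    (hξ : ∀ s, HasDerivAt ξ (2 * α ^ 2 * lam ^ 2 / (r s) ^ 3) s)
    (hchar : ∀ s, (α ^ 2 / (r s) ^ 2 - 1) * lam ^ 2 + (ξ s) ^ 2 = 0) :
    ∃ c, ∀ s, r s ^ 2 = α ^ 2 + (2 * lam * s + c) ^ 2 := by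
  set c := r 0 * ξ 0 / lam
  have hlamc : lam * c = r 0 * ξ 0 := mul_div_cancel₀ _ hlam
  have hderiv : ∀ s, HasDerivAt (fun s => r s ^ 2 - (2 * lam * s + c) ^ 2) 0 s := by
    intro s
    refine (((hr s).fun_pow 2).fun_sub
      ((((hasDerivAt_id' s).const_mul (2 * lam)).add_const c).fun_pow 2)).congr_deriv ?_
    linear_combination 4 * radius_mul_momentum_eq hrpos hr hξ hchar s - 4 * hlamc
  refine ⟨c, fun s => ?_⟩
  have hconst := is_const_of_deriv_eq_zero (fun s => (hderiv s).differentiableAt)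
    (fun s => (hderiv s).deriv) s 0
  have h0 : r 0 ^ 2 - c ^ 2 = α ^ 2 := by
    have hchar0 := hchar 0
    field_simp [(hrpos 0).ne'] at hchar0
    apply mul_left_cancel₀ (pow_ne_zero 2 hlam)
    linear_combination -hchar0 - (lam * c + r 0 * ξ 0) * hlamc
  simp only [mul_zero, zero_add] at hconst
  linarith

theorem forward_escape_general (α lam : ℝ) (hlam : lam ≠ 0)
    (t r ξ : ℝ → ℝ) (hrpos : ∀ s, 0 < r s)
    (ht : ∀ s, HasDerivAt t (-2 * lam * (1 - α ^ 2 / (r s) ^ 2)) s)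
    (hr : ∀ s, HasDerivAt r (2 * ξ s) s)
    (hξ : ∀ s, HasDerivAt ξ (2 * α ^ 2 * lam ^ 2 / (r s) ^ 3) s)
    (hchar : ∀ s, (α ^ 2 / (r s) ^ 2 - 1) * lam ^ 2 + (ξ s) ^ 2 = 0) :
    Xor' (Filter.Tendsto t Filter.atTop Filter.atBot ∧
          Filter.Tendsto r Filter.atTop Filter.atTop)
         (Filter.Tendsto t Filter.atBot Filter.atBot ∧
          Filter.Tendsto r Filter.atBot Filter.atTop) := by
  obtain ⟨c, hc⟩ := exists_radius_sq_eq hlam hrpos hr hξ hchar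
  have hr_lim : Tendsto r (cocompact ℝ) atTop :=
    tendsto_cocompact_atTop_of_abs_affine_le (mul_ne_zero two_ne_zero hlam) fun s =>
      abs_le_of_sq_le_sq (by rw [hc s]; linarith [sq_nonneg α]) (hrpos s).le
  have ht'_lim : Tendsto (fun s => -2 * lam * (1 - α ^ 2 / r s ^ 2)) (cocompact ℝ)
      (𝓝 (-2 * lam)) := by
    simpa using ((tendsto_const_nhds.div_atTop ((tendsto_pow_atTop two_ne_zero).comp hr_lim)).const_sub 1).const_mul
      (-2 * lam)
  rw [cocompact_eq_atBot_atTop, tendsto_sup] at hr_lim ht'_lim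
  rcases hlam.lt_or_gt with hneg | hpos
  · have ht_top := tendsto_atTop_of_hasDerivAt_of_tendsto ht (by linarith) ht'_lim.2
    have ht_bot := tendsto_atBot_of_hasDerivAt_of_tendsto ht (by linarith) ht'_lim.1
    exact Or.inr ⟨⟨ht_bot, hr_lim.1⟩, fun h => ht_top.not_tendsto disjoint_atTop_atBot h.1⟩
  · have ht_top := tendsto_neg_atTop_iff.1 <| tendsto_atTop_of_hasDerivAt_of_tendsto
      (fun s => (ht s).neg) (by linarith) ht'_lim.2.neg
    have ht_bot := tendsto_neg_atBot_iff.1 <| tendsto_atBot_of_hasDerivAt_of_tendsto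
      (fun s => (ht s).neg) (by linarith) ht'_lim.1.neg
    exact Or.inl ⟨⟨ht_top, hr_lim.2⟩, fun h => ht_bot.not_tendsto disjoint_atTop_atBot h.1⟩

/-- Forward escape of bicharacteristics: along a maximal null bicharacteristic of
`p = (α²/r² − 1)λ² + ξ²` with `λ ≠ 0` and `r > 0`, exactly one of the two time directions
`s → ±∞` has `t(s) → −∞` and `r(s) → +∞`: every null bicharacteristic escapes to
arbitrarily large `r` in backward time `t`. -/
theorem forward_escape (α lam : ℝ) (hα : 0 < α) (hlam : lam ≠ 0)
    (t r ξ : ℝ → ℝ) (hrpos : ∀ s, 0 < r s)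
    (ht : ∀ s, HasDerivAt t (-2 * lam * (1 - α ^ 2 / (r s) ^ 2)) s)
    (hr : ∀ s, HasDerivAt r (2 * ξ s) s)
    (hξ : ∀ s, HasDerivAt ξ (2 * α ^ 2 * lam ^ 2 / (r s) ^ 3) s)
    (hchar : ∀ s, (α ^ 2 / (r s) ^ 2 - 1) * lam ^ 2 + (ξ s) ^ 2 = 0) :
    Xor' (Filter.Tendsto t Filter.atTop Filter.atBot ∧
          Filter.Tendsto r Filter.atTop Filter.atTop)
         (Filter.Tendsto t Filter.atBot Filter.atBot ∧
          Filter.Tendsto r Filter.atBot Filter.atTop) :=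
  forward_escape_general α lam hlam t r ξ hrpos ht hr hξ hchar
end
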